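/- Let (R,m) be a one-dimensional Cohen–Macaulay local ring whose integral closure R̄ in Q(R) is a finite R-module, with conductor c = R :_{Q(R)} R̄, and assume every regular ideal has a principal reduction. Let ω be a canonical ideal of R and I a regular ideal. Then tr(I) = c if and only if I* ≅ c as R-modules, if and only if Iω ≅ c as R-modules. In particular tr(ω) = c if and only if ω² ≅ c. -/

import Mathlib

/-!
Inside the total quotient ring `Q`, a regular ideal becomes a submodule containing a unit, and for
such submodules `Hom_R(M, N) = N :_Q M`; in particular `I* = R : I`, `tr(I) = (R : I) I`, and
isomorphisms between such submodules are multiplications by units of `Q`.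

If `a` is a principal reduction of `I`, each `k / a` (`k ∈ I`) stabilises the finitely generated
module `I^n`, so it is integral: `I ⊆ a R̄` and `c I = a c`. Hence `tr(I) = c` forces
`R : I = a⁻¹ c`. Conversely, if `R : I ≅ c` then `R : I` is an `R̄`-module, so `(R : I) I` is
`R̄`-stable and lies in `c`, while `c ⊆ (R : I) I` always. The same integrality argument shows that
every `R̄`-stable regular ideal is a cyclic `R̄`-module.

Reflexivity with respect to `ω` gives `ω : (ω : J) = J`, hence `ω : ω = R`, `ω : Iω = R : I` and
`Iω = ω : (R : I)`. A multiple of `ω : c` is an `R̄`-stable regular ideal, so `ω : c ≅ R̄ ≅ c`, and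
applying `ω : -` exchanges `R : I ≅ c` with `Iω ≅ c`.
-/

set_option synthInstance.maxHeartbeats 1000000
set_option maxHeartbeats 1000000

open nonZeroDivisors IsLocalRing

variable (R : Type*) [CommRing R]

/-- The trace ideal of an `R`-module `M`. -/
noncomputable def traceIdeal (M : Type*) [AddCommGroup M] [Module R M] : Ideal R :=
  ⨆ f : M →ₗ[R] R, LinearMap.range f

/-- The conductor `c = R :_{Q(R)} R̄` of the integral closure `R̄` of `R` in its
total quotient ring, viewed as an ideal of `R`. -/
noncomputable def conductorIdeal : Ideal R :=
  Submodule.comap (Algebra.linearMap R (Localization R⁰))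
    ((1 : Submodule R (Localization R⁰)) /
      Subalgebra.toSubmodule (integralClosure R (Localization R⁰)))

/-- `ω` is a canonical ideal of the one-dimensional Cohen–Macaulay local ring
`R`: it is a regular ideal and every regular ideal (i.e. every maximal
Cohen–Macaulay ideal) is reflexive with respect to `ω`, meaning the natural
evaluation map `I → Hom_R(Hom_R(I,ω),ω)` is bijective. -/
def IsCanonicalIdeal (ω : Ideal R) : Prop :=
  (∃ x ∈ ω, x ∈ R⁰) ∧
    ∀ I : Ideal R, (∃ x ∈ I, x ∈ R⁰) →
      Function.Bijective ((LinearMap.id : (I →ₗ[R] ω) →ₗ[R] (I →ₗ[R] ω)).flip)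

namespace Submodule

variable {R A : Type*} [CommRing R] [CommRing A] [Algebra R A]

theorem div_mul_eq_div_div (M N P : Submodule R A) : M / (N * P) = M / P / N :=
  eq_of_forall_le_iff fun X => by simp only [le_div_iff_mul_le, mul_assoc]

theorem div_one (M : Submodule R A) : M / 1 = M := by
  refine le_antisymm (fun x hx => ?_) (le_div_iff_mul_le.mpr (mul_one M).le)
  simpa using hx 1 (one_le.mp le_rfl)

theorem le_div_of_le_one {M N : Submodule R A} (h : N ≤ 1) : M ≤ M / N :=
  le_div_iff_mul_le.mpr ((mul_le_mul_right h M).trans (mul_one M).le)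

theorem mul_div_le_div {B M N : Submodule R A} (h : B * N ≤ N) : B * (M / N) ≤ M / N := by
  rw [le_div_iff_mul_le]
  calc B * (M / N) * N = M / N * (B * N) := by ring
    _ ≤ M / N * N := mul_le_mul_right h _
    _ ≤ M := le_div_iff_mul_le.mp le_rfl

theorem span_singleton_mul_cancel {x y : A} (h : x * y = 1) (M : Submodule R A) :
    span R {x} * (span R {y} * M) = M := by
  rw [← mul_assoc, span_mul_span, Set.singleton_mul_singleton, h, ← one_eq_span, one_mul]

noncomputable def spanSingletonMulEquiv {u : A} (hu : IsUnit u) (M : Submodule R A) :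
    M ≃ₗ[R] ↥(span R {u} * M) :=
  (M.equivMapOfInjective (LinearMap.mulLeft R u) hu.mul_right_injective).trans
    (LinearEquiv.ofEq _ _ (by rw [span_singleton_mul]; rfl))

def divToLinearMap (M N : Submodule R A) : ↥(N / M) →ₗ[R] (M →ₗ[R] N) where
  toFun q := (LinearMap.mulLeft R (q : A)).restrict fun _ hx => q.2 _ hx
  map_add' _ _ := by ext; exact add_mul ..
  map_smul' _ _ := by ext; exact smul_mul_assoc ..

@[simp]
theorem divToLinearMap_apply_coe {M N : Submodule R A} (q : ↥(N / M)) (x : M) :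
    (divToLinearMap M N q x : A) = q * x :=
  rfl

theorem divToLinearMap_injective {M N : Submodule R A} (hM : ∃ u ∈ M, IsUnit u) :
    Function.Injective (divToLinearMap M N) := fun q q' h => by
  obtain ⟨u, huM, hu⟩ := hM
  have := congrArg (fun f => (f ⟨u, huM⟩ : A)) h
  simp only [divToLinearMap_apply_coe] at this
  exact Subtype.ext (hu.mul_left_injective this)

end Submodule

namespace IsLocalization

variable {R : Type*} [CommRing R] {Q : Type*} [CommRing Q] [Algebra R Q]
  {M N : Submodule R Q}

open Submodule

theorem exists_linearMap_eq_mul (S : Submonoid R) [IsLocalization S Q] {u : Q} (hu : IsUnit u)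
    (huM : u ∈ M) (f : M →ₗ[R] Q) : ∃ q : Q, ∀ x : M, f x = q * x := by
  obtain ⟨v, hv⟩ := hu.exists_left_inv
  refine ⟨v * f ⟨u, huM⟩, fun x => ?_⟩
  obtain ⟨⟨a, s⟩, hs⟩ := surj S (x : Q)
  obtain ⟨⟨b, t⟩, ht⟩ := surj S u
  simp only at hs ht
  -- `b s • x = a t • u` in `M`, and `b s` is a unit of `Q` since `b = u t`
  have hbs : IsUnit (algebraMap R Q (b * s)) := by
    rw [map_mul, ← ht]
    exact (hu.mul (map_units Q t)).mul (map_units Q s)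
  have key : (b * s) • x = (a * t) • (⟨u, huM⟩ : M) := by
    ext
    simp only [SetLike.val_smul, Algebra.smul_def, map_mul, ← hs, ← ht]
    ring
  have hf := congrArg (fun y => (f y : Q)) key
  simp only [map_smul, Algebra.smul_def] at hf
  apply hbs.mul_left_cancel
  rw [hf, map_mul, map_mul, ← hs, ← ht]
  linear_combination -((x : Q) * algebraMap R Q s * algebraMap R Q t * f ⟨u, huM⟩) * hv

theorem divToLinearMap_surjective (S : Submonoid R) [IsLocalization S Q]
    (hM : ∃ u ∈ M, IsUnit u) : Function.Surjective (divToLinearMap M N) := fun f => by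
  obtain ⟨u, huM, hu⟩ := hM
  obtain ⟨q, hq⟩ := exists_linearMap_eq_mul S hu huM (N.subtype ∘ₗ f)
  refine ⟨⟨q, fun x hx => ?_⟩, LinearMap.ext fun x => Subtype.ext (hq x).symm⟩
  exact hq ⟨x, hx⟩ ▸ (f ⟨x, hx⟩).2

noncomputable def divEquivLinearMap (S : Submonoid R) [IsLocalization S Q]
    (hM : ∃ u ∈ M, IsUnit u) : ↥(N / M) ≃ₗ[R] (M →ₗ[R] N) :=
  .ofBijective _ ⟨divToLinearMap_injective hM, divToLinearMap_surjective S hM⟩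

@[simp]
theorem divEquivLinearMap_apply (S : Submonoid R) [IsLocalization S Q] (hM : ∃ u ∈ M, IsUnit u)
    (q : ↥(N / M)) : divEquivLinearMap S hM q = divToLinearMap M N q :=
  rfl

theorem exists_span_mul_eq_of_linearEquiv (S : Submonoid R) [IsLocalization S Q]
    (hM : ∃ u ∈ M, IsUnit u) (e : M ≃ₗ[R] N) : ∃ q : Q, span R {q} * M = N := by
  obtain ⟨u, huM, hu⟩ := hM
  obtain ⟨q, hq⟩ := exists_linearMap_eq_mul S hu huM (N.subtype ∘ₗ e.toLinearMap)
  have hqe : ∀ x : M, (e x : Q) = q * x := hq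
  refine ⟨q, le_antisymm (fun y hy => ?_) fun y hy => ?_⟩
  · obtain ⟨x, hx, rfl⟩ := mem_span_singleton_mul.mp hy
    exact hqe ⟨x, hx⟩ ▸ (e ⟨x, hx⟩).2
  · have := hqe (e.symm ⟨y, hy⟩)
    rw [e.apply_symm_apply] at this
    exact mem_span_singleton_mul.mpr ⟨_, (e.symm ⟨y, hy⟩).2, this.symm⟩

noncomputable def divEquivDiv (S : Submonoid R) [IsLocalization S Q] (P : Submodule R Q)
    (hM : ∃ u ∈ M, IsUnit u) (hN : ∃ v ∈ N, IsUnit v) (e : M ≃ₗ[R] N) :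
    ↥(P / M) ≃ₗ[R] ↥(P / N) :=
  divEquivLinearMap S hM ≪≫ₗ e.arrowCongr (.refl R P) ≪≫ₗ (divEquivLinearMap S hN).symm

end IsLocalization

section CoeSubmodule

open IsLocalization

theorem coeSubmodule_le_one {R : Type*} [CommRing R] (Q : Type*) [CommRing Q] [Algebra R Q]
    (I : Ideal R) : coeSubmodule Q I ≤ 1 :=
  coeSubmodule_top (R := R) (S := Q) ▸ coeSubmodule_mono Q le_top

theorem coeSubmodule_comap_eq {R : Type*} [CommRing R] {Q : Type*} [CommRing Q] [Algebra R Q]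
    {X : Submodule R Q} (hX : X ≤ 1) : coeSubmodule Q (X.comap (Algebra.linearMap R Q)) = X := by
  rw [coeSubmodule, Submodule.map_comap_eq, ← Submodule.one_eq_range]
  exact inf_eq_right.mpr hX

end CoeSubmodule

section FractionRing

variable {R : Type*} [CommRing R] (Q : Type*) [CommRing Q] [Algebra R Q] [IsFractionRing R Q]

open IsLocalization Submodule

noncomputable def coeSubmoduleEquiv (I : Ideal R) : I ≃ₗ[R] coeSubmodule Q I :=
  I.equivMapOfInjective _ (IsFractionRing.injective R Q)

@[simp]
theorem coe_coeSubmoduleEquiv_apply (I : Ideal R) (x : I) :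
    (coeSubmoduleEquiv Q I x : Q) = algebraMap R Q x :=
  rfl

@[simp]
theorem algebraMap_coeSubmoduleEquiv_symm_apply (I : Ideal R) (y : coeSubmodule Q I) :
    algebraMap R Q ((coeSubmoduleEquiv Q I).symm y) = y := by
  rw [← coe_coeSubmoduleEquiv_apply, LinearEquiv.apply_symm_apply]

variable {Q}

theorem exists_isUnit_mem_coeSubmodule {I : Ideal R} (hI : ∃ x ∈ I, x ∈ R⁰) :
    ∃ u ∈ coeSubmodule Q I, IsUnit u :=
  let ⟨x, hxI, hx⟩ := hI
  ⟨algebraMap R Q x, ⟨x, hxI, rfl⟩, map_units Q ⟨x, hx⟩⟩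

variable (Q)

noncomputable def linearMapEquivDiv {I : Ideal R} (hI : ∃ x ∈ I, x ∈ R⁰) (J : Ideal R) :
    (I →ₗ[R] J) ≃ₗ[R] ↥(coeSubmodule Q J / coeSubmodule Q I) :=
  (coeSubmoduleEquiv Q I).arrowCongr (coeSubmoduleEquiv Q J) ≪≫ₗ
    (divEquivLinearMap R⁰ (exists_isUnit_mem_coeSubmodule hI)).symm

theorem algebraMap_linearMapEquivDiv_symm_apply {I : Ideal R} (hI : ∃ x ∈ I, x ∈ R⁰)
    {J : Ideal R} (q : ↥(coeSubmodule Q J / coeSubmodule Q I)) (x : I) :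
    algebraMap R Q ((linearMapEquivDiv Q hI J).symm q x) = q * algebraMap R Q x := by
  simp [linearMapEquivDiv]

noncomputable def dualEquivOneDiv {I : Ideal R} (hI : ∃ x ∈ I, x ∈ R⁰) :
    (I →ₗ[R] R) ≃ₗ[R] ↥(1 / coeSubmodule Q I) :=
  LinearEquiv.congrRight Submodule.topEquiv.symm ≪≫ₗ linearMapEquivDiv Q hI ⊤ ≪≫ₗ
    LinearEquiv.ofEq _ _ (by rw [coeSubmodule_top])

theorem algebraMap_dualEquivOneDiv_symm_apply {I : Ideal R} (hI : ∃ x ∈ I, x ∈ R⁰)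
    (q : ↥(1 / coeSubmodule Q I)) (x : I) :
    algebraMap R Q ((dualEquivOneDiv Q hI).symm q x) = q * algebraMap R Q x :=
  algebraMap_linearMapEquivDiv_symm_apply Q hI ⟨q, by rw [coeSubmodule_top]; exact q.2⟩ x

theorem coeSubmodule_traceIdeal {I : Ideal R} (hI : ∃ x ∈ I, x ∈ R⁰) :
    coeSubmodule Q (traceIdeal R I) = 1 / coeSubmodule Q I * coeSubmodule Q I := by
  apply le_antisymm
  · rw [traceIdeal, coeSubmodule, Submodule.map_iSup]
    refine iSup_le fun f => ?_
    rintro _ ⟨_, ⟨x, rfl⟩, rfl⟩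
    obtain ⟨q, rfl⟩ := (dualEquivOneDiv Q hI).symm.surjective f
    rw [Algebra.linearMap_apply, algebraMap_dualEquivOneDiv_symm_apply]
    exact mul_mem_mul q.2 ⟨x, x.2, rfl⟩
  · rw [mul_le]
    rintro q hq _ ⟨x, hx, rfl⟩
    have := algebraMap_dualEquivOneDiv_symm_apply Q hI ⟨q, hq⟩ ⟨x, hx⟩
    rw [Algebra.linearMap_apply, ← this]
    exact ⟨_, le_iSup (fun f : I →ₗ[R] R => LinearMap.range f) _ ⟨_, rfl⟩, rfl⟩

end FractionRing

section Canonical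

variable {R : Type*} [CommRing R] {Q : Type*} [CommRing Q] [Algebra R Q] [IsFractionRing R Q]
  {ω : Ideal R}

open IsLocalization Submodule

theorem div_div_eq_of_isCanonicalIdeal (hω : IsCanonicalIdeal R ω) {I : Ideal R}
    (hI : ∃ x ∈ I, x ∈ R⁰) :
    coeSubmodule Q ω / (coeSubmodule Q ω / coeSubmodule Q I) = coeSubmodule Q I := by
  refine le_antisymm (fun x hx => ?_) (Submodule.le_div_iff_mul_le.mpr ?_)
  · let e := linearMapEquivDiv Q hI ω
    let g : (I →ₗ[R] ω) →ₗ[R] ω := (coeSubmoduleEquiv Q ω).symm.toLinearMap ∘ₗ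
      divToLinearMap _ _ ⟨x, hx⟩ ∘ₗ e.toLinearMap
    -- `g` is evaluation at some `k ∈ I`; evaluating both at multiplication by `w ∈ ω` gives `x = k`
    obtain ⟨k, hk⟩ := (hω.2 I hI).2 g
    obtain ⟨w, hwω, hw⟩ := hω.1
    have hwW := le_div_of_le_one (M := coeSubmodule Q ω) (coeSubmodule_le_one Q I) ⟨w, hwω, rfl⟩
    have hgk := congrArg (fun F => algebraMap R Q (F (e.symm ⟨_, hwW⟩) : R)) hk
    simp only [LinearMap.flip_apply, LinearMap.id_apply, g, LinearMap.comp_apply,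
      LinearEquiv.coe_coe, LinearEquiv.apply_symm_apply, algebraMap_coeSubmoduleEquiv_symm_apply,
      divToLinearMap_apply_coe, e, algebraMap_linearMapEquivDiv_symm_apply] at hgk
    rw [mul_comm x] at hgk
    exact ⟨k, k.2, (map_units Q ⟨w, hw⟩).mul_left_cancel hgk⟩
  · rw [mul_comm]
    exact Submodule.le_div_iff_mul_le.mp le_rfl

theorem div_self_eq_one_of_isCanonicalIdeal (hω : IsCanonicalIdeal R ω) :
    coeSubmodule Q ω / coeSubmodule Q ω = 1 := by
  simpa [coeSubmodule_top, Submodule.div_one] using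
    div_div_eq_of_isCanonicalIdeal (Q := Q) hω (I := ⊤) ⟨1, trivial, one_mem _⟩

theorem div_coeSubmodule_mul_eq_one_div (hω : IsCanonicalIdeal R ω) (I : Ideal R) :
    coeSubmodule Q ω / coeSubmodule Q (I * ω) = 1 / coeSubmodule Q I := by
  rw [coeSubmodule_mul, Submodule.div_mul_eq_div_div, div_self_eq_one_of_isCanonicalIdeal hω]

theorem coeSubmodule_mul_eq_div_one_div (hω : IsCanonicalIdeal R ω) {I : Ideal R}
    (hI : ∃ x ∈ I, x ∈ R⁰) :
    coeSubmodule Q (I * ω) = coeSubmodule Q ω / (1 / coeSubmodule Q I) := by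
  obtain ⟨x, hxI, hx⟩ := hI
  obtain ⟨w, hwω, hw⟩ := hω.1
  rw [← div_coeSubmodule_mul_eq_one_div hω, div_div_eq_of_isCanonicalIdeal hω
    ⟨x * w, Ideal.mul_mem_mul hxI hwω, mul_mem hx hw⟩]

end Canonical

def HasPrincipalReductions (R : Type*) [CommRing R] : Prop :=
  ∀ K : Ideal R, (∃ x ∈ K, x ∈ R⁰) →
    ∃ x ∈ K, x ∈ R⁰ ∧ ∃ n : ℕ, Ideal.span {x} * K ^ n = K ^ (n + 1)

section Conductor

variable {R : Type*} [CommRing R] {Q : Type*} [CommRing Q] [Algebra R Q]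

open IsLocalization Submodule

variable (R Q) in
noncomputable def conductorSubmodule : Submodule R Q :=
  1 / (integralClosure R Q).toSubmodule

theorem conductorSubmodule_le_one : conductorSubmodule R Q ≤ 1 := fun x hx => by
  simpa using hx 1 (integralClosure R Q).one_mem

theorem integralClosure_mul_conductorSubmodule_le :
    (integralClosure R Q).toSubmodule * conductorSubmodule R Q ≤ conductorSubmodule R Q :=
  mul_div_le_div (Subalgebra.isIdempotentElem_toSubmodule _).le

theorem le_conductorSubmodule {X : Submodule R Q} (hX : X ≤ 1)
    (hXstable : (integralClosure R Q).toSubmodule * X ≤ X) : X ≤ conductorSubmodule R Q :=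
  le_div_iff_mul_le.mpr (mul_comm X _ ▸ hXstable.trans hX)

theorem exists_algebraMap_mem_conductorSubmodule [IsFractionRing R Q]
    (hfin : Module.Finite R (integralClosure R Q)) :
    ∃ c ∈ R⁰, algebraMap R Q c ∈ conductorSubmodule R Q := by
  have hfg : (integralClosure R Q).toSubmodule.FG := Module.Finite.iff_fg.mp hfin
  obtain ⟨c, hc, hcint⟩ := FractionalIdeal.isFractional_of_fg (S := R⁰) hfg
  refine ⟨c, hc, fun y hy => ?_⟩
  obtain ⟨r, hr⟩ := hcint y hy
  exact mem_one.mpr ⟨r, by rw [hr, Algebra.smul_def]⟩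

theorem exists_isUnit_mem_conductorSubmodule [IsFractionRing R Q]
    (hfin : Module.Finite R (integralClosure R Q)) :
    ∃ u ∈ conductorSubmodule R Q, IsUnit u :=
  let ⟨c, hc, hcC⟩ := exists_algebraMap_mem_conductorSubmodule hfin
  ⟨_, hcC, map_units Q ⟨c, hc⟩⟩

end Conductor

section Reduction

variable {R : Type*} [CommRing R] [IsNoetherianRing R] {Q : Type*} [CommRing Q] [Algebra R Q]

open IsLocalization Submodule

theorem isIntegral_of_mul_mem {M : Submodule R Q} (hM : M.FG) {u : Q} (hu : IsUnit u)
    (huM : u ∈ M) {t : Q} (ht : ∀ x ∈ M, t * x ∈ M) : IsIntegral R t := by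
  have hpow : ∀ m : ℕ, t ^ m * u ∈ M := fun m => by
    induction m with
    | zero => simpa using huM
    | succ m ih => simpa [pow_succ', mul_assoc] using ht _ ih
  obtain ⟨v, hv⟩ := hu.exists_left_inv
  have hadjoin : (Algebra.adjoin R {t}).toSubmodule ≤ span R {v} * M := by
    rw [Algebra.adjoin_eq_span, span_le]
    intro x hx
    obtain ⟨m, rfl⟩ := Submonoid.mem_closure_singleton.mp hx
    exact mem_span_singleton_mul.mpr ⟨_, hpow m, by rw [mul_left_comm, hv, mul_one]⟩
  exact .of_mem_of_fg _ (((fg_span_singleton v).mul hM).of_le hadjoin) t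
    (Algebra.self_mem_adjoin_singleton R t)

variable [IsFractionRing R Q]

theorem coeSubmodule_le_span_mul_integralClosure {K : Ideal R} {a : R} (haK : a ∈ K)
    (ha : a ∈ R⁰) {n : ℕ} (hred : Ideal.span {a} * K ^ n = K ^ (n + 1)) :
    coeSubmodule Q K ≤ span R {algebraMap R Q a} * (integralClosure R Q).toSubmodule := by
  rintro _ ⟨k, hk, rfl⟩
  set t := mk' Q k ⟨a, ha⟩
  have hstable : ∀ x ∈ coeSubmodule Q (K ^ n), t * x ∈ coeSubmodule Q (K ^ n) := by
    rintro _ ⟨y, hy, rfl⟩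
    have hky : algebraMap R Q (k * y) ∈ span R {algebraMap R Q a} * coeSubmodule Q (K ^ n) := by
      rw [← coeSubmodule_span_singleton, ← coeSubmodule_mul, hred, pow_succ']
      exact ⟨k * y, Ideal.mul_mem_mul hk hy, rfl⟩
    obtain ⟨z, hz, hkz⟩ := mem_span_singleton_mul.mp hky
    convert hz using 1
    apply (map_units Q ⟨a, ha⟩).mul_left_cancel
    rw [hkz, map_mul, ← mul_assoc, mul_comm _ t, mk'_spec]
    rfl
  have hfg : (coeSubmodule Q (K ^ n)).FG :=
    (coeSubmodule_fg _ (IsFractionRing.injective R Q) _).mpr (IsNoetherian.noetherian _)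
  have ht : IsIntegral R t := isIntegral_of_mul_mem hfg (map_units Q ⟨a ^ n, pow_mem ha n⟩)
    ⟨a ^ n, Ideal.pow_mem_pow haK n, rfl⟩ hstable
  exact mem_span_singleton_mul.mpr ⟨t, ht, by rw [mul_comm, mk'_spec]; rfl⟩

theorem eq_span_mul_integralClosure_of_mul_le (hpr : HasPrincipalReductions R)
    {X : Submodule R Q} (hX : X ≤ 1) (hXstable : (integralClosure R Q).toSubmodule * X ≤ X)
    (hreg : ∃ r ∈ R⁰, algebraMap R Q r ∈ X) :
    ∃ a ∈ R⁰, X = span R {algebraMap R Q a} * (integralClosure R Q).toSubmodule := by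
  obtain ⟨r, hr, hrX⟩ := hreg
  obtain ⟨a, haK, ha, n, hred⟩ := hpr (X.comap (Algebra.linearMap R Q)) ⟨r, hrX, hr⟩
  refine ⟨a, ha, le_antisymm ?_ ?_⟩
  · exact coeSubmodule_comap_eq hX ▸ coeSubmodule_le_span_mul_integralClosure haK ha hred
  · calc span R {algebraMap R Q a} * (integralClosure R Q).toSubmodule
        ≤ X * (integralClosure R Q).toSubmodule :=
          mul_le_mul_left ((span_singleton_le_iff_mem _ X).mpr haK) _
      _ = (integralClosure R Q).toSubmodule * X := mul_comm _ _
      _ ≤ X := hXstable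

end Reduction

section ConductorReduction

variable {R : Type*} [CommRing R] [IsNoetherianRing R] {Q : Type*} [CommRing Q] [Algebra R Q]
  [IsFractionRing R Q]

open IsLocalization Submodule

theorem exists_conductorSubmodule_eq_span_mul (hfin : Module.Finite R (integralClosure R Q))
    (hpr : HasPrincipalReductions R) :
    ∃ c ∈ R⁰, conductorSubmodule R Q =
      span R {algebraMap R Q c} * (integralClosure R Q).toSubmodule :=
  eq_span_mul_integralClosure_of_mul_le hpr conductorSubmodule_le_one
    integralClosure_mul_conductorSubmodule_le (exists_algebraMap_mem_conductorSubmodule hfin)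

theorem conductorSubmodule_mul_coeSubmodule {K : Ideal R} {a : R} (haK : a ∈ K) (ha : a ∈ R⁰)
    {n : ℕ} (hred : Ideal.span {a} * K ^ n = K ^ (n + 1)) :
    conductorSubmodule R Q * coeSubmodule Q K =
      span R {algebraMap R Q a} * conductorSubmodule R Q := by
  have haK' : span R {algebraMap R Q a} ≤ coeSubmodule Q K :=
    (span_singleton_le_iff_mem _ _).mpr ⟨a, haK, rfl⟩
  refine le_antisymm ?_ ((mul_le_mul_left haK' _).trans_eq (mul_comm _ _))
  calc conductorSubmodule R Q * coeSubmodule Q K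
      ≤ conductorSubmodule R Q * (span R {algebraMap R Q a} * (integralClosure R Q).toSubmodule) :=
        mul_le_mul_right (coeSubmodule_le_span_mul_integralClosure haK ha hred) _
    _ = span R {algebraMap R Q a} *
          ((integralClosure R Q).toSubmodule * conductorSubmodule R Q) := by ring
    _ ≤ span R {algebraMap R Q a} * conductorSubmodule R Q :=
        mul_le_mul_right integralClosure_mul_conductorSubmodule_le _

theorem span_mul_conductorSubmodule_le_one_div {K : Ideal R} {a : R} (haK : a ∈ K)
    (ha : a ∈ R⁰) {n : ℕ} (hred : Ideal.span {a} * K ^ n = K ^ (n + 1)) :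
    span R {mk' Q 1 ⟨a, ha⟩} * conductorSubmodule R Q ≤ 1 / coeSubmodule Q K := by
  rw [Submodule.le_div_iff_mul_le, mul_assoc, conductorSubmodule_mul_coeSubmodule haK ha hred,
    span_singleton_mul_cancel (by rw [mk'_spec, map_one])]
  exact conductorSubmodule_le_one

theorem conductorSubmodule_le_one_div_mul {K : Ideal R} {a : R} (haK : a ∈ K) (ha : a ∈ R⁰)
    {n : ℕ} (hred : Ideal.span {a} * K ^ n = K ^ (n + 1)) :
    conductorSubmodule R Q ≤ 1 / coeSubmodule Q K * coeSubmodule Q K :=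
  calc conductorSubmodule R Q
      = span R {mk' Q 1 ⟨a, ha⟩} * conductorSubmodule R Q * coeSubmodule Q K := by
        rw [mul_assoc, conductorSubmodule_mul_coeSubmodule haK ha hred,
          span_singleton_mul_cancel (by rw [mk'_spec, map_one])]
    _ ≤ 1 / coeSubmodule Q K * coeSubmodule Q K :=
        mul_le_mul_left (span_mul_conductorSubmodule_le_one_div haK ha hred) _

theorem exists_isUnit_mem_one_div (hfin : Module.Finite R (integralClosure R Q))
    (hpr : HasPrincipalReductions R) {I : Ideal R} (hI : ∃ x ∈ I, x ∈ R⁰) :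
    ∃ u ∈ 1 / coeSubmodule Q I, IsUnit u := by
  obtain ⟨a, haI, ha, n, hred⟩ := hpr I hI
  obtain ⟨c, hc, hcC⟩ := exists_algebraMap_mem_conductorSubmodule (Q := Q) hfin
  refine ⟨_, span_mul_conductorSubmodule_le_one_div haI ha hred
    (mem_span_singleton_mul.mpr ⟨_, hcC, rfl⟩), IsUnit.mul ?_ (map_units Q ⟨c, hc⟩)⟩
  exact .of_mul_eq_one _ (by rw [mk'_spec, map_one])

end ConductorReduction

section TraceConductor

variable {R : Type*} [CommRing R] [IsNoetherianRing R] {Q : Type*} [CommRing Q] [Algebra R Q]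
  [IsFractionRing R Q]

open IsLocalization Submodule

theorem coeSubmodule_traceIdeal_eq_conductorSubmodule_iff
    (hfin : Module.Finite R (integralClosure R Q)) (hpr : HasPrincipalReductions R)
    {I : Ideal R} (hI : ∃ x ∈ I, x ∈ R⁰) :
    coeSubmodule Q (traceIdeal R I) = conductorSubmodule R Q ↔
      Nonempty (↥(1 / coeSubmodule Q I) ≃ₗ[R] conductorSubmodule R Q) := by
  obtain ⟨a, haI, ha, n, hred⟩ := hpr I hI
  have hv : mk' Q 1 ⟨a, ha⟩ * algebraMap R Q a = 1 := by rw [mk'_spec, map_one]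
  rw [coeSubmodule_traceIdeal Q hI]
  constructor
  · intro h
    have hdual : 1 / coeSubmodule Q I = span R {mk' Q 1 ⟨a, ha⟩} * conductorSubmodule R Q := by
      refine le_antisymm (fun x hx => ?_) (span_mul_conductorSubmodule_le_one_div haI ha hred)
      have hxa : x * algebraMap R Q a ∈ conductorSubmodule R Q := h ▸ mul_mem_mul hx ⟨a, haI, rfl⟩
      exact mem_span_singleton_mul.mpr ⟨_, hxa, by rw [mul_left_comm, hv, mul_one]⟩
    exact ⟨.ofEq _ _ hdual ≪≫ₗ (spanSingletonMulEquiv (.of_mul_eq_one _ hv) _).symm⟩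
  · rintro ⟨e⟩
    -- `1 / I` is a multiple of the conductor, so an `R̄`-module
    obtain ⟨p, hp⟩ :=
      exists_span_mul_eq_of_linearEquiv R⁰ (exists_isUnit_mem_conductorSubmodule hfin) e.symm
    refine le_antisymm (le_conductorSubmodule ?_ ?_) (conductorSubmodule_le_one_div_mul haI ha hred)
    · exact mul_comm (coeSubmodule Q I) _ ▸ mul_one_div_le_one
    · rw [← hp]
      calc (integralClosure R Q).toSubmodule *
            (span R {p} * conductorSubmodule R Q * coeSubmodule Q I)
          = span R {p} * ((integralClosure R Q).toSubmodule * conductorSubmodule R Q) *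
              coeSubmodule Q I := by ring
        _ ≤ span R {p} * conductorSubmodule R Q * coeSubmodule Q I :=
            mul_le_mul_left (mul_le_mul_right integralClosure_mul_conductorSubmodule_le _) _

theorem nonempty_div_conductorSubmodule_equiv (hfin : Module.Finite R (integralClosure R Q))
    (hpr : HasPrincipalReductions R) {ω : Ideal R} (hω : IsCanonicalIdeal R ω) :
    Nonempty (↥(coeSubmodule Q ω / conductorSubmodule R Q) ≃ₗ[R] conductorSubmodule R Q) := by
  obtain ⟨c, hc, hC⟩ := exists_conductorSubmodule_eq_span_mul (Q := Q) hfin hpr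
  obtain ⟨w, hwω, hw⟩ := hω.1
  have hcC : algebraMap R Q c ∈ conductorSubmodule R Q :=
    hC ▸ mem_span_singleton_mul.mpr ⟨1, (integralClosure R Q).one_mem, mul_one _⟩
  set X := span R {algebraMap R Q c} * (coeSubmodule Q ω / conductorSubmodule R Q)
  have hX1 : X ≤ 1 :=
    calc X ≤ conductorSubmodule R Q * (coeSubmodule Q ω / conductorSubmodule R Q) :=
          mul_le_mul_left ((span_singleton_le_iff_mem _ _).mpr hcC) _
      _ = coeSubmodule Q ω / conductorSubmodule R Q * conductorSubmodule R Q := mul_comm _ _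
      _ ≤ coeSubmodule Q ω := Submodule.le_div_iff_mul_le.mp le_rfl
      _ ≤ 1 := coeSubmodule_le_one Q ω
  have hXstable : (integralClosure R Q).toSubmodule * X ≤ X := by
    rw [mul_left_comm]
    exact mul_le_mul_right (mul_div_le_div integralClosure_mul_conductorSubmodule_le) _
  have hXreg : algebraMap R Q (c * w) ∈ X := mem_span_singleton_mul.mpr
    ⟨_, le_div_of_le_one conductorSubmodule_le_one ⟨w, hwω, rfl⟩, (map_mul _ _ _).symm⟩
  obtain ⟨d, hd, hX⟩ :=
    eq_span_mul_integralClosure_of_mul_le hpr hX1 hXstable ⟨c * w, mul_mem hc hw, hXreg⟩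
  exact ⟨spanSingletonMulEquiv (map_units Q ⟨c, hc⟩) _ ≪≫ₗ .ofEq _ _ hX ≪≫ₗ
    (spanSingletonMulEquiv (map_units Q ⟨d, hd⟩) _).symm ≪≫ₗ
    spanSingletonMulEquiv (map_units Q ⟨c, hc⟩) _ ≪≫ₗ .ofEq _ _ hC.symm⟩

theorem nonempty_one_div_equiv_iff_nonempty_coeSubmodule_mul_equiv
    (hfin : Module.Finite R (integralClosure R Q)) (hpr : HasPrincipalReductions R)
    {ω : Ideal R} (hω : IsCanonicalIdeal R ω) {I : Ideal R} (hI : ∃ x ∈ I, x ∈ R⁰) :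
    Nonempty (↥(1 / coeSubmodule Q I) ≃ₗ[R] conductorSubmodule R Q) ↔
      Nonempty (coeSubmodule Q (I * ω) ≃ₗ[R] conductorSubmodule R Q) := by
  obtain ⟨eω⟩ := nonempty_div_conductorSubmodule_equiv (Q := Q) hfin hpr hω
  have hC := exists_isUnit_mem_conductorSubmodule (Q := Q) hfin
  obtain ⟨w, hwω, hw⟩ := hω.1
  have hIω : ∃ u ∈ coeSubmodule Q (I * ω), IsUnit u := exists_isUnit_mem_coeSubmodule <|
    let ⟨x, hxI, hx⟩ := hI; ⟨x * w, Ideal.mul_mem_mul hxI hwω, mul_mem hx hw⟩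
  constructor
  · rintro ⟨e⟩
    rw [coeSubmodule_mul_eq_div_one_div hω hI]
    exact ⟨divEquivDiv R⁰ _ (exists_isUnit_mem_one_div hfin hpr hI) hC e ≪≫ₗ eω⟩
  · rintro ⟨e⟩
    rw [← div_coeSubmodule_mul_eq_one_div hω]
    exact ⟨divEquivDiv R⁰ _ hIω hC e ≪≫ₗ eω⟩

end TraceConductor

theorem LinearEquiv.nonempty_congr {R M₁ M₂ N₁ N₂ : Type*} [Semiring R] [AddCommMonoid M₁]
    [AddCommMonoid M₂] [AddCommMonoid N₁] [AddCommMonoid N₂] [Module R M₁] [Module R M₂]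
    [Module R N₁] [Module R N₂] (e₁ : M₁ ≃ₗ[R] M₂) (e₂ : N₁ ≃ₗ[R] N₂) :
    Nonempty (M₁ ≃ₗ[R] N₁) ↔ Nonempty (M₂ ≃ₗ[R] N₂) :=
  ⟨fun ⟨e⟩ => ⟨e₁.symm ≪≫ₗ e ≪≫ₗ e₂⟩, fun ⟨e⟩ => ⟨e₁ ≪≫ₗ e ≪≫ₗ e₂.symm⟩⟩

section Localization

variable {R : Type*} [CommRing R]

open IsLocalization

theorem coeSubmodule_conductorIdeal :
    coeSubmodule (Localization R⁰) (conductorIdeal R) = conductorSubmodule R (Localization R⁰) :=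
  coeSubmodule_comap_eq conductorSubmodule_le_one

theorem traceIdeal_eq_conductorIdeal_iff [IsNoetherianRing R]
    (hfin : Module.Finite R (integralClosure R (Localization R⁰))) (hpr : HasPrincipalReductions R)
    {ω : Ideal R} (hω : IsCanonicalIdeal R ω) {I : Ideal R} (hI : ∃ x ∈ I, x ∈ R⁰) :
    (traceIdeal R I = conductorIdeal R ↔ Nonempty ((I →ₗ[R] R) ≃ₗ[R] conductorIdeal R)) ∧
      (Nonempty ((I →ₗ[R] R) ≃ₗ[R] conductorIdeal R) ↔
        Nonempty ((I * ω : Ideal R) ≃ₗ[R] conductorIdeal R)) := by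
  let Q := Localization R⁰
  let eC : conductorIdeal R ≃ₗ[R] conductorSubmodule R Q :=
    coeSubmoduleEquiv Q _ ≪≫ₗ .ofEq _ _ coeSubmodule_conductorIdeal
  have hdual := (dualEquivOneDiv Q hI).nonempty_congr eC
  have hmul := (coeSubmoduleEquiv Q (I * ω)).nonempty_congr eC
  refine ⟨?_, hdual.trans ((nonempty_one_div_equiv_iff_nonempty_coeSubmodule_mul_equiv
    hfin hpr hω hI).trans hmul.symm)⟩
  rw [← (coeSubmodule_injective Q le_rfl).eq_iff, coeSubmodule_conductorIdeal, hdual]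
  exact coeSubmodule_traceIdeal_eq_conductorSubmodule_iff hfin hpr hI

end Localization

theorem trace_eq_conductor_iff_general (R : Type*) [CommRing R]
    [IsNoetherianRing R]
    (hfin : Module.Finite R (integralClosure R (Localization R⁰)))
    (hpr : ∀ K : Ideal R, (∃ x ∈ K, x ∈ R⁰) →
      ∃ x ∈ K, x ∈ R⁰ ∧ ∃ n : ℕ, Ideal.span {x} * K ^ n = K ^ (n + 1))
    (ω : Ideal R) (hω : IsCanonicalIdeal R ω)
    (I : Ideal R) (hreg : ∃ x ∈ I, x ∈ R⁰) :
    ((traceIdeal R I = conductorIdeal R) ↔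
        Nonempty ((I →ₗ[R] R) ≃ₗ[R] conductorIdeal R)) ∧
      (Nonempty ((I →ₗ[R] R) ≃ₗ[R] conductorIdeal R) ↔
        Nonempty ((I * ω : Ideal R) ≃ₗ[R] conductorIdeal R)) ∧
      ((traceIdeal R ω = conductorIdeal R) ↔
        Nonempty ((ω * ω : Ideal R) ≃ₗ[R] conductorIdeal R)) := by
  obtain ⟨hI, hIω⟩ := traceIdeal_eq_conductorIdeal_iff hfin hpr hω hreg
  obtain ⟨hω₁, hω₂⟩ := traceIdeal_eq_conductorIdeal_iff hfin hpr hω hω.1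
  exact ⟨hI, hIω, hω₁.trans hω₂⟩

/-- Let `(R,m)` be a one-dimensional Cohen–Macaulay local ring whose integral
closure `R̄` is module-finite, with conductor `c`, and in which every regular
ideal has a principal reduction.  For a canonical ideal `ω` and a regular ideal
`I`:  `tr(I) = c` iff `I* ≅ c` iff `Iω ≅ c`; in particular `tr(ω) = c` iff
`ω² ≅ c`. -/
theorem trace_eq_conductor_iff (R : Type*) [CommRing R] [IsLocalRing R]
    [IsNoetherianRing R]
    (hdim : ringKrullDim R = 1)
    (hCM : ∃ r ∈ maximalIdeal R, r ∈ R⁰)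
    (hfin : Module.Finite R (integralClosure R (Localization R⁰)))
    (hpr : ∀ K : Ideal R, (∃ x ∈ K, x ∈ R⁰) →
      ∃ x ∈ K, x ∈ R⁰ ∧ ∃ n : ℕ, Ideal.span {x} * K ^ n = K ^ (n + 1))
    (ω : Ideal R) (hω : IsCanonicalIdeal R ω)
    (I : Ideal R) (hreg : ∃ x ∈ I, x ∈ R⁰) :
    ((traceIdeal R I = conductorIdeal R) ↔
        Nonempty ((I →ₗ[R] R) ≃ₗ[R] conductorIdeal R)) ∧
      (Nonempty ((I →ₗ[R] R) ≃ₗ[R] conductorIdeal R) ↔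
        Nonempty ((I * ω : Ideal R) ≃ₗ[R] conductorIdeal R)) ∧
      ((traceIdeal R ω = conductorIdeal R) ↔
        Nonempty ((ω * ω : Ideal R) ≃ₗ[R] conductorIdeal R)) :=
  trace_eq_conductor_iff_general R hfin hpr ω hω I hreg
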